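/- Let H be a group, Λ, H₀ ≤ H subgroups and C ≤ H a subgroup with Λ·H₀·C = H. Set Λ₁ = Λ ∩ (H₀C), H₁ = Λ₁H₀ (assume this is a subgroup), C₁ = C ∩ H₁. Then the natural map of double coset spaces Λ₁\H₁/C₁ → Λ\H/C is a bijection. -/
import Mathlib


open Pointwise

/-- If `Λ H₀ C = H`, `H₀C` and `H₁ := Λ₁H₀` are subgroups where
`Λ₁ = Λ ∩ (H₀C)` and `C₁ = C ∩ H₁`, then the natural map of double coset
spaces `Λ₁\H₁/C₁ → Λ\H/C` is a bijection. -/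
theorem stmt13 {H : Type} [Group H] (Λ H₀ C : Subgroup H)
    (hfact : ∀ h : H, ∃ l ∈ Λ, ∃ h₀ ∈ H₀, ∃ c ∈ C, h = l * h₀ * c)
    (D : Subgroup H) (hD : (D : Set H) = (H₀ : Set H) * (C : Set H))
    (H₁ : Subgroup H)
    (hH₁ : (H₁ : Set H) = ((Λ ⊓ D : Subgroup H) : Set H) * (H₀ : Set H)) :
    -- surjectivity of the natural map `Λ₁\H₁/C₁ → Λ\H/C`
    (∀ h : H, ∃ h₁ ∈ H₁, ∃ l ∈ Λ, ∃ c ∈ C, h = l * h₁ * c) ∧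
    -- injectivity: double cosets that merge in `Λ\H/C` already agree in `Λ₁\H₁/C₁`
    (∀ h₁ ∈ H₁, ∀ h₂ ∈ H₁, (∃ l ∈ Λ, ∃ c ∈ C, h₂ = l * h₁ * c) →
      ∃ l' ∈ (Λ ⊓ D : Subgroup H), ∃ c' ∈ (C ⊓ H₁ : Subgroup H),
        h₂ = l' * h₁ * c') := by
  have hH₀D : ∀ x ∈ H₀, x ∈ D := fun x hx => by
    rw [← SetLike.mem_coe, hD]
    exact ⟨x, hx, 1, one_mem _, mul_one x⟩
  have hCD : ∀ x ∈ C, x ∈ D := fun x hx => by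
    rw [← SetLike.mem_coe, hD]
    exact ⟨1, one_mem _, x, hx, one_mul x⟩
  have hH₀H₁ : ∀ x ∈ H₀, x ∈ H₁ := fun x hx => by
    rw [← SetLike.mem_coe, hH₁]
    exact ⟨1, one_mem _, x, hx, one_mul x⟩
  have hΛ₁H₁ : ∀ x ∈ (Λ ⊓ D : Subgroup H), x ∈ H₁ := fun x hx => by
    rw [← SetLike.mem_coe, hH₁]
    exact ⟨x, hx, 1, one_mem _, mul_one x⟩
  have hH₁D : ∀ x ∈ H₁, x ∈ D := fun x hx => by
    rw [← SetLike.mem_coe, hH₁] at hx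
    obtain ⟨a, ha, b, hb, rfl⟩ := hx
    exact mul_mem (SetLike.mem_coe.mp ha).2 (hH₀D b hb)
  constructor
  · intro h
    obtain ⟨l, hl, h₀, hh₀, c, hc, rfl⟩ := hfact h
    exact ⟨h₀, hH₀H₁ _ hh₀, l, hl, c, hc, rfl⟩
  · rintro h₁ hh₁ h₂ hh₂ ⟨l, hl, c, hc, heq⟩
    have hlD : l ∈ D := by
      have : l = h₂ * c⁻¹ * h₁⁻¹ := by
        rw [heq]; group
      rw [this]
      exact mul_mem (mul_mem (hH₁D _ hh₂) (inv_mem (hCD _ hc))) (inv_mem (hH₁D _ hh₁))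
    have hlH₁ : l ∈ H₁ := hΛ₁H₁ l ⟨hl, hlD⟩
    have hcH₁ : c ∈ H₁ := by
      have : c = (l * h₁)⁻¹ * h₂ := by
        rw [heq]; group
      rw [this]
      exact mul_mem (inv_mem (mul_mem hlH₁ hh₁)) hh₂
    exact ⟨l, ⟨hl, hlD⟩, c, ⟨hc, hcH₁⟩, heq⟩
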